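/- Let m ≥ 2 be an integer and set α = (m − 3)/2. Then the quotient of the two integrals (∫_{−1}^{1} arcsin(t) · t · (1 − t²)^α dt) / (∫_{−1}^{1} t² · (1 − t²)^α dt) equals 1/γ(m) = (m/2)·(Γ(m/2)/Γ((m+1)/2))². -/

import Mathlib

/-!
Integrating by parts against `d/dt (1 - t²)^(α+1) = -2(α+1) t (1 - t²)^α`, the boundary terms
vanish and the numerator and the denominator become `I(α + 1/2) / (2(α+1))` and
`I(α + 1) / (2(α+1))`, where `I(a) = ∫₋₁¹ (1 - t²)^a dt` (for the numerator because
`arcsin' t · (1 - t²)^(α+1) = (1 - t²)^(α+1/2)`).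
Writing `(1 - t²)^a = (1 - t²)^(a+1) + t² (1 - t²)^a` gives the recursion
`I(a + 1) = (2a+2)/(2a+3) · I(a)`, so from `I(0) = 2` and `I(1/2) = π/2` one gets
`I(k/2) = √π Γ(k/2 + 1) / Γ(k/2 + 3/2)`, and the quotient `I((m-2)/2) / I((m-1)/2)`
is `1/γ(m)`.
-/

noncomputable def gam (n : ℕ) : ℝ :=
  2 / (n : ℝ) * (Real.Gamma (((n : ℝ) + 1) / 2) / Real.Gamma ((n : ℝ) / 2)) ^ 2

open Real MeasureTheory intervalIntegral Set

theorem intervalIntegrable_one_sub_sq_rpow {β : ℝ} (hβ : -1 < β) :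
    IntervalIntegrable (fun t : ℝ => (1 - t ^ 2) ^ β) volume (-1) 1 := by
  have factor : ∀ t ∈ Icc (-1 : ℝ) 1, (1 - t ^ 2) ^ β = (1 + t) ^ β * (1 - t) ^ β :=
    fun t ht ↦ by
    rw [← mul_rpow (by linarith [ht.1]) (by linarith [ht.2])]
    ring_nf
  have left : IntervalIntegrable (fun t : ℝ => (1 - t ^ 2) ^ β) volume (-1) 0 := by
    have hsing : IntervalIntegrable (fun t : ℝ => (1 + t) ^ β) volume (-1) 0 := by
      simpa [add_comm] using (intervalIntegrable_rpow' (a := 0) (b := 1) hβ).comp_add_right 1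
    refine (hsing.mul_continuousOn (g := fun t => (1 - t) ^ β) ?_).congr fun t ht ↦ ?_
    · refine (continuousOn_const.sub continuousOn_id).rpow_const fun t ht ↦ Or.inl ?_
      rw [uIcc_of_le (by norm_num)] at ht
      exact (show (0 : ℝ) < 1 - t by linarith [ht.2]).ne'
    · rw [uIoc_of_le (by norm_num)] at ht
      exact (factor t ⟨ht.1.le, by linarith [ht.2]⟩).symm
  have right : IntervalIntegrable (fun t : ℝ => (1 - t ^ 2) ^ β) volume 0 1 := by
    have hsing : IntervalIntegrable (fun t : ℝ => (1 - t) ^ β) volume 0 1 := by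
      simpa using ((intervalIntegrable_rpow' (a := 0) (b := 1) hβ).comp_sub_left 1).symm
    refine (hsing.continuousOn_mul (g := fun t => (1 + t) ^ β) ?_).congr fun t ht ↦ ?_
    · refine (continuousOn_const.add continuousOn_id).rpow_const fun t ht ↦ Or.inl ?_
      rw [uIcc_of_le (by norm_num)] at ht
      exact (show (0 : ℝ) < 1 + t by linarith [ht.1]).ne'
    · rw [uIoc_of_le (by norm_num)] at ht
      exact (factor t ⟨by linarith [ht.1], ht.2⟩).symm
  exact left.trans right

theorem hasDerivAt_one_sub_sq_rpow (c : ℝ) {t : ℝ} (ht : t ∈ Ioo (-1 : ℝ) 1) :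
    HasDerivAt (fun t : ℝ => (1 - t ^ 2) ^ c) (-(2 * t) * c * (1 - t ^ 2) ^ (c - 1)) t := by
  have hpos : 0 < 1 - t ^ 2 := by nlinarith [ht.1, ht.2]
  have h : HasDerivAt (fun t : ℝ => 1 - t ^ 2) (-(2 * t)) t := by
    simpa using (hasDerivAt_pow 2 t).const_sub 1
  exact h.rpow_const (Or.inl hpos.ne')

theorem integral_mul_mul_one_sub_sq_rpow_of_hasDerivAt {g g' : ℝ → ℝ} {a : ℝ} (ha : -1 < a)
    (hg : ContinuousOn g (Icc (-1) 1)) (hg' : ∀ t ∈ Ioo (-1 : ℝ) 1, HasDerivAt g (g' t) t)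
    (hint : IntervalIntegrable (fun t => g' t * (1 - t ^ 2) ^ (a + 1)) volume (-1) 1) :
    ∫ t in (-1 : ℝ)..1, g t * t * (1 - t ^ 2) ^ a =
      (∫ t in (-1 : ℝ)..1, g' t * (1 - t ^ 2) ^ (a + 1)) / (2 * (a + 1)) := by
  have hc : 0 < a + 1 := by linarith
  set F : ℝ → ℝ := fun t => -(g t * (1 - t ^ 2) ^ (a + 1)) / (2 * (a + 1))
  have hF : ∀ t ∈ Ioo (-1 : ℝ) 1, HasDerivAt F
      (g t * t * (1 - t ^ 2) ^ a - g' t * (1 - t ^ 2) ^ (a + 1) / (2 * (a + 1))) t := by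
    intro t ht
    refine (((hg' t ht).mul (hasDerivAt_one_sub_sq_rpow (a + 1) ht)).neg.div_const _).congr_deriv ?_
    rw [add_sub_cancel_right]
    field_simp
    ring
  have hFcont : ContinuousOn F (Icc (-1) 1) :=
    ((hg.mul ((continuousOn_const.sub (continuousOn_pow 2)).rpow_const
      fun _ _ ↦ Or.inr hc.le)).neg).div_const _
  have hint_lhs : IntervalIntegrable (fun t => g t * t * (1 - t ^ 2) ^ a) volume (-1) 1 :=
    (intervalIntegrable_one_sub_sq_rpow ha).continuousOn_mul
      (by rw [uIcc_of_le (by norm_num)]; exact hg.mul continuousOn_id)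
  have hFTC := integral_eq_sub_of_hasDerivAt_of_le (by norm_num) hFcont hF
    (hint_lhs.sub (hint.div_const _))
  have hF_boundary : F 1 = 0 ∧ F (-1) = 0 := by simp [F, zero_rpow hc.ne']
  rw [integral_sub hint_lhs (hint.div_const _), intervalIntegral.integral_div, hF_boundary.1,
    hF_boundary.2] at hFTC
  linarith

noncomputable def integralOneSubSqRpow (a : ℝ) : ℝ := ∫ t in (-1 : ℝ)..1, (1 - t ^ 2) ^ a

theorem integral_sq_mul_one_sub_sq_rpow {a : ℝ} (ha : -1 < a) :
    ∫ t in (-1 : ℝ)..1, t ^ 2 * (1 - t ^ 2) ^ a =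
      integralOneSubSqRpow (a + 1) / (2 * (a + 1)) := by
  have hint : IntervalIntegrable (fun t : ℝ => 1 * (1 - t ^ 2) ^ (a + 1)) volume (-1) 1 := by
    simpa using intervalIntegrable_one_sub_sq_rpow (β := a + 1) (by linarith)
  simpa [← sq, integralOneSubSqRpow] using
    integral_mul_mul_one_sub_sq_rpow_of_hasDerivAt ha continuousOn_id
      (fun t _ ↦ hasDerivAt_id t) hint

theorem integral_arcsin_mul_mul_one_sub_sq_rpow {a : ℝ} (ha : -1 < a) :
    ∫ t in (-1 : ℝ)..1, arcsin t * t * (1 - t ^ 2) ^ a =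
      integralOneSubSqRpow (a + 1 / 2) / (2 * (a + 1)) := by
  -- only on the open interval: at `t = ±1`, for `a = -1/2`, the left side is `0 ^ 0 = 1`
  have hweight : EqOn (fun t : ℝ => (1 - t ^ 2) ^ (a + 1 / 2))
      (fun t => 1 / √(1 - t ^ 2) * (1 - t ^ 2) ^ (a + 1)) (Ioo (-1) 1) := fun t ht ↦ by
    have hpos : 0 < 1 - t ^ 2 := by nlinarith [ht.1, ht.2]
    dsimp only
    rw [div_mul_eq_mul_div, one_mul, eq_div_iff (by positivity), sqrt_eq_rpow, ← rpow_add hpos]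
    ring_nf
  have hint := (intervalIntegrable_one_sub_sq_rpow (β := a + 1 / 2) (by linarith)).congr_uIoo
    (by rwa [uIoo_of_le (by norm_num)])
  rw [integral_mul_mul_one_sub_sq_rpow_of_hasDerivAt ha continuous_arcsin.continuousOn
    (fun t ht ↦ hasDerivAt_arcsin ht.1.ne' ht.2.ne) hint, integralOneSubSqRpow,
    integral_congr_Ioo_of_le (by norm_num) hweight]

theorem integralOneSubSqRpow_add_one {a : ℝ} (ha : -1 < a) :
    integralOneSubSqRpow (a + 1) = (2 * a + 2) / (2 * a + 3) * integralOneSubSqRpow a := by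
  have hsplit : EqOn (fun t : ℝ => (1 - t ^ 2) ^ a)
      (fun t => (1 - t ^ 2) ^ (a + 1) + t ^ 2 * (1 - t ^ 2) ^ a) (Ioo (-1) 1) := fun t ht ↦ by
    have hpos : 0 < 1 - t ^ 2 := by nlinarith [ht.1, ht.2]
    simp only [rpow_add_one hpos.ne']
    ring
  have hsum : integralOneSubSqRpow a = integralOneSubSqRpow (a + 1) +
      integralOneSubSqRpow (a + 1) / (2 * (a + 1)) := by
    rw [← integral_sq_mul_one_sub_sq_rpow ha, integralOneSubSqRpow, integralOneSubSqRpow,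
      integral_congr_Ioo_of_le (by norm_num) hsplit, intervalIntegral.integral_add]
    · exact intervalIntegrable_one_sub_sq_rpow (by linarith)
    · exact (intervalIntegrable_one_sub_sq_rpow ha).continuousOn_mul (continuousOn_pow 2)
  have h1 : a + 1 ≠ 0 := by linarith
  have h2 : 2 * a + 3 ≠ 0 := by linarith
  rw [hsum, div_mul_eq_mul_div, eq_div_iff h2]
  field_simp
  ring

theorem integralOneSubSqRpow_half (k : ℕ) :
    integralOneSubSqRpow (k / 2) = √π * Gamma (k / 2 + 1) / Gamma (k / 2 + 3 / 2) := by
  have hGamma_three_halves : Gamma (3 / 2) = √π / 2 := by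
    rw [show (3 / 2 : ℝ) = 1 / 2 + 1 by norm_num, Gamma_add_one (by norm_num), Gamma_one_half_eq]
    ring
  have hsqrtpi : √π ≠ 0 := (sqrt_pos.2 pi_pos).ne'
  induction k using Nat.twoStepInduction with
  | zero =>
    norm_num [integralOneSubSqRpow, hGamma_three_halves]
    field_simp
  | one =>
    have hJ : integralOneSubSqRpow (1 / 2) = π / 2 := by
      rw [← integral_sqrt_one_sub_sq, integralOneSubSqRpow]
      simp only [sqrt_eq_rpow]
    norm_num [hJ, hGamma_three_halves]
    field_simp
    rw [sq_sqrt pi_pos.le]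
  | more k ih _ =>
    have hk : (0 : ℝ) ≤ k := k.cast_nonneg
    have hG1 : Gamma (k / 2 + 1) ≠ 0 := (Gamma_pos_of_pos (by positivity)).ne'
    have hG2 : Gamma (k / 2 + 3 / 2) ≠ 0 := (Gamma_pos_of_pos (by positivity)).ne'
    rw [show (((k + 2 : ℕ) : ℝ) / 2) = k / 2 + 1 by push_cast; ring,
      integralOneSubSqRpow_add_one (by linarith), ih,
      Gamma_add_one (s := k / 2 + 1) (by positivity),
      show (k : ℝ) / 2 + 1 + 3 / 2 = k / 2 + 3 / 2 + 1 by ring,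
      Gamma_add_one (s := k / 2 + 3 / 2) (by positivity)]
    field_simp

theorem integralOneSubSqRpow_half_div_succ (k : ℕ) :
    integralOneSubSqRpow (k / 2) / integralOneSubSqRpow ((k + 1 : ℕ) / 2) = 1 / gam (k + 2) := by
  have hk : (0 : ℝ) ≤ k := k.cast_nonneg
  have hG1 : Gamma (k / 2 + 1) ≠ 0 := (Gamma_pos_of_pos (by positivity)).ne'
  have hG2 : Gamma (k / 2 + 3 / 2) ≠ 0 := (Gamma_pos_of_pos (by positivity)).ne'
  have hsqrtpi : √π ≠ 0 := (sqrt_pos.2 pi_pos).ne'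
  rw [integralOneSubSqRpow_half, integralOneSubSqRpow_half, gam]
  push_cast
  rw [show ((k : ℝ) + 1) / 2 + 1 = k / 2 + 3 / 2 by ring,
    show ((k : ℝ) + 1) / 2 + 3 / 2 = k / 2 + 1 + 1 by ring,
    Gamma_add_one (s := k / 2 + 1) (by positivity),
    show ((k : ℝ) + 2 + 1) / 2 = k / 2 + 3 / 2 by ring,
    show ((k : ℝ) + 2) / 2 = k / 2 + 1 by ring]
  field_simp

theorem stmt7 (m : ℕ) (hm : 2 ≤ m) :
    (∫ t in (-1 : ℝ)..1, Real.arcsin t * t * (1 - t ^ 2) ^ (((m : ℝ) - 3) / 2)) /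
      (∫ t in (-1 : ℝ)..1, t ^ 2 * (1 - t ^ 2) ^ (((m : ℝ) - 3) / 2)) =
      1 / gam m := by
  obtain ⟨k, rfl⟩ : ∃ k, m = k + 2 := ⟨m - 2, by omega⟩
  have ha : -1 < (((k + 2 : ℕ) : ℝ) - 3) / 2 := by
    push_cast; linarith [k.cast_nonneg (α := ℝ)]
  rw [integral_arcsin_mul_mul_one_sub_sq_rpow ha, integral_sq_mul_one_sub_sq_rpow ha,
    div_div_div_cancel_right₀ (by linarith),
    show (((k + 2 : ℕ) : ℝ) - 3) / 2 + 1 / 2 = (k : ℕ) / 2 by push_cast; ring,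
    show (((k + 2 : ℕ) : ℝ) - 3) / 2 + 1 = (k + 1 : ℕ) / 2 by push_cast; ring]
  exact integralOneSubSqRpow_half_div_succ k
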